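/- arXiv:2505.15693 — 7 statements merged into one kernel-verified Lean document; each statement's English description precedes it below -/
import Mathlib

section
/- Let A = (Q, q0, δ, F) be a deterministic Büchi automaton over a finite nonempty alphabet Σ whose language from the initial state L_{q0}(A) is nonempty. Then L_{q0}(A) is an absolute liveness specification if, and only if, for every reachable state s of A, the language accepted from s contains the language accepted from q0, i.e., L_{q0}(A) ⊆ L_s(A). -/
/-- The ω-word obtained by prepending the finite word `u` to the ω-word `w`. -/
def prepend {A : Type*} (u : List A) (w : ℕ → A) : ℕ → A :=
  fun i => if h : i < u.length then u.get ⟨i, h⟩ else w (i - u.length)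

/-- A specification `L` is an absolute liveness specification if it is nonempty and
closed under prepending arbitrary finite prefixes. -/
def AbsoluteLiveness {A : Type*} (L : Set (ℕ → A)) : Prop :=
  L.Nonempty ∧ ∀ (u : List A) (w : ℕ → A), w ∈ L → prepend u w ∈ L

/-- The run of a deterministic automaton with transition function `δ`
from state `q` on the ω-word `w`. -/
def dRun {Q A : Type*} (δ : Q → A → Q) (q : Q) (w : ℕ → A) : ℕ → Q
  | 0 => q
  | n + 1 => δ (dRun δ q w n) (w n)

/-- The language of the deterministic Büchi automaton `(δ, F)` from state `q`:
ω-words whose run from `q` takes an accepting transition infinitely often. -/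
def dLang {Q A : Type*} (δ : Q → A → Q) (F : Set (Q × A)) (q : Q) : Set (ℕ → A) :=
  {w | ∃ᶠ i in Filter.atTop, (dRun δ q w i, w i) ∈ F}

/-- A state `s` is reachable from `q0` if some finite word drives the automaton
from `q0` to `s`. -/
def dReachable {Q A : Type*} (δ : Q → A → Q) (q0 s : Q) : Prop :=
  ∃ u : List A, u.foldl δ q0 = s

lemma dRun_shift {Q A : Type*} (δ : Q → A → Q) (q : Q) (w : ℕ → A) (i : ℕ) :
    dRun δ q w (i + 1) = dRun δ (δ q (w 0)) (fun j => w (j + 1)) i := by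
  induction i with
  | zero => rfl
  | succ n ih => show δ (dRun δ q w (n+1)) (w (n+1)) = _; rw [ih]; rfl

lemma prepend_cons {A : Type*} (a : A) (t : List A) (w : ℕ → A) (i : ℕ) :
    prepend (a :: t) w (i + 1) = prepend t w i := by
  simp only [prepend, List.length_cons]
  by_cases h : i < t.length
  · rw [dif_pos (by omega), dif_pos h]; rfl
  · rw [dif_neg (by omega), dif_neg h]
    congr 1; omega

lemma dRun_prepend {Q A : Type*} (δ : Q → A → Q) (u : List A) (w : ℕ → A) :
    ∀ (q : Q) (i : ℕ), dRun δ q (prepend u w) (u.length + i) = dRun δ (u.foldl δ q) w i := by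
  induction u with
  | nil =>
    intro q i
    have : prepend ([] : List A) w = w := by funext j; simp [prepend]
    simp [this]
  | cons a t ih =>
    intro q i
    have h0 : prepend (a :: t) w 0 = a := by simp [prepend]
    have hs : (fun j => prepend (a :: t) w (j + 1)) = prepend t w := by
      funext j; exact prepend_cons a t w j
    have : (a :: t).length + i = (t.length + i) + 1 := by simp; omega
    rw [this, dRun_shift, h0, hs, ih]
    rfl

lemma prepend_eval {A : Type*} (u : List A) (w : ℕ → A) (i : ℕ) :
    prepend u w (u.length + i) = w i := by
  simp only [prepend]
  rw [dif_neg (by omega)]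
  congr 1; omega

lemma freq_shift {P : ℕ → Prop} (n : ℕ) :
    (∃ᶠ i in Filter.atTop, P (n + i)) ↔ ∃ᶠ i in Filter.atTop, P i := by
  rw [Filter.frequently_atTop, Filter.frequently_atTop]
  constructor
  · intro h a
    obtain ⟨b, hb, hp⟩ := h a
    exact ⟨n + b, by omega, hp⟩
  · intro h a
    obtain ⟨b, hb, hp⟩ := h (n + a)
    exact ⟨b - n, by omega, by rwa [show n + (b - n) = b by omega]⟩

lemma prepend_mem_iff {Q A : Type*} (δ : Q → A → Q) (F : Set (Q × A)) (q : Q)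
    (u : List A) (w : ℕ → A) :
    prepend u w ∈ dLang δ F q ↔ w ∈ dLang δ F (u.foldl δ q) := by
  unfold dLang
  simp only [Set.mem_setOf_eq]
  rw [← freq_shift (P := fun i => (dRun δ q (prepend u w) i, prepend u w i) ∈ F) u.length]
  apply Filter.frequently_congr
  filter_upwards with i
  rw [dRun_prepend, prepend_eval]

theorem absolute_liveness_iff_language_containment
    {A Q : Type*} [Fintype A] [Nonempty A] [Fintype Q]
    (δ : Q → A → Q) (q0 : Q) (F : Set (Q × A))
    (hne : (dLang δ F q0).Nonempty) :
    AbsoluteLiveness (dLang δ F q0) ↔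
      ∀ s : Q, dReachable δ q0 s → dLang δ F q0 ⊆ dLang δ F s := by
  constructor
  · rintro ⟨-, hcl⟩ s ⟨u, rfl⟩ w hw
    exact (prepend_mem_iff δ F q0 u w).mp (hcl u w hw)
  · intro h
    exact ⟨hne, fun u w hw =>
      (prepend_mem_iff δ F q0 u w).mpr (h (u.foldl δ q0) ⟨u, rfl⟩ hw)⟩
end

section
/- Let A = (Q, q0, δ, F) be a nondeterministic Büchi automaton over a finite nonempty alphabet Σ. Then L_{q0}(A) is a stable specification if, and only if, for every reachable state s of A, the language accepted from s is contained in the language accepted from q0, i.e., L_s(A) ⊆ L_{q0}(A). -/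
/-- A specification `L` is a stable specification if it is closed under suffixes. -/
def Stable {A : Type*} (L : Set (ℕ → A)) : Prop :=
  ∀ w ∈ L, ∀ n : ℕ, (fun i => w (n + i)) ∈ L

/-- The language of the nondeterministic Büchi automaton `(δ, F)` from state `q`:
ω-words admitting a run from `q` that takes an accepting transition infinitely often. -/
def nLang {Q A : Type*} (δ : Q → A → Set Q) (F : Set (Q × A × Q)) (q : Q) :
    Set (ℕ → A) :=
  {w | ∃ r : ℕ → Q, r 0 = q ∧ (∀ i, r (i + 1) ∈ δ (r i) (w i)) ∧
        ∃ᶠ i in Filter.atTop, (r i, w i, r (i + 1)) ∈ F}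

/-- A state `s` is reachable from `q0` if there are a finite word `u` and a sequence of
states starting at `q0`, ending at `s`, and following `δ` along the letters of `u`. -/
def nReachable {Q A : Type*} (δ : Q → A → Set Q) (q0 s : Q) : Prop :=
  ∃ (u : List A) (p : ℕ → Q), p 0 = q0 ∧ p u.length = s ∧
    ∀ j : Fin u.length, p (j + 1) ∈ δ (p j) (u.get j)

theorem stable_iff_language_containment
    {A Q : Type*} [Fintype A] [Nonempty A] [Fintype Q]
    (δ : Q → A → Set Q) (q0 : Q) (F : Set (Q × A × Q)) :
    Stable (nLang δ F q0) ↔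
      ∀ s : Q, nReachable δ q0 s → nLang δ F s ⊆ nLang δ F q0 := by
  constructor
  · intro hst s hs w hw
    obtain ⟨u, p, hp0, hpn, hstep⟩ := hs
    obtain ⟨r, hr0, hrstep, hrF⟩ := hw
    set n := u.length with hn
    set w' : ℕ → A := fun i => if h : i < n then u.get ⟨i, h⟩ else w (i - n) with hw'
    set r' : ℕ → Q := fun i => if i < n then p i else r (i - n) with hr'
    have hr'n : ∀ i, n ≤ i → r' i = r (i - n) := by
      intro i hi
      simp [hr', Nat.not_lt.mpr hi]
    have hmem : w' ∈ nLang δ F q0 := by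
      refine ⟨r', ?_, ?_, ?_⟩
      · by_cases h : 0 < n
        · simpa [hr', h] using hp0
        · have hn0 : n = 0 := by omega
          have : r' 0 = r 0 := by simp [hr', h]
          rw [this, hr0, ← hpn, hn0, hp0]
      · intro i
        rcases lt_or_ge i n with hi | hi
        · have h1 : r' i = p i := by simp [hr', hi]
          have hwi : w' i = u.get ⟨i, hi⟩ := by simp [hw', hi]
          have h2 : r' (i + 1) = p (i + 1) := by
            rcases lt_or_ge (i + 1) n with h | h
            · simp [hr', h]
            · have hin : i + 1 = n := by omega
              rw [hr'n _ h, hin, Nat.sub_self, hr0, ← hpn]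
          rw [h1, h2, hwi]
          exact hstep ⟨i, hi⟩
        · have h1 : r' i = r (i - n) := hr'n i hi
          have h2 : r' (i + 1) = r (i - n + 1) := by
            rw [hr'n _ (by omega)]; congr 1; omega
          have hwi : w' i = w (i - n) := by simp [hw', Nat.not_lt.mpr hi]
          rw [h1, h2, hwi]
          exact hrstep (i - n)
      · rw [Filter.frequently_atTop] at hrF ⊢
        intro N
        obtain ⟨i, hi, hF⟩ := hrF N
        refine ⟨i + n, by omega, ?_⟩
        have e1 : r' (i + n) = r i := by rw [hr'n _ (by omega)]; congr 1; omega
        have e2 : r' (i + n + 1) = r (i + 1) := by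
          rw [hr'n _ (by omega)]; congr 1; omega
        have e3 : w' (i + n) = w i := by
          have h : ¬ i + n < n := by omega
          simp [hw', h]
        rw [e1, e2, e3]
        exact hF
    have hdrop := hst w' hmem n
    have heq : (fun i => w' (n + i)) = w := by
      funext i
      have h : ¬ n + i < n := by omega
      simp [hw', h]
    rwa [heq] at hdrop
  · intro hc w hw n
    obtain ⟨r, hr0, hrstep, hrF⟩ := hw
    have hreach : nReachable δ q0 (r n) := by
      refine ⟨List.ofFn (fun i : Fin n => w i), r, hr0, by simp, ?_⟩
      intro j
      have hj : (j : ℕ) < n := by simpa using j.isLt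
      have hg : (List.ofFn (fun i : Fin n => w i)).get j = w j := by
        simp [List.get_ofFn]
      rw [hg]
      exact hrstep j
    apply hc (r n) hreach
    refine ⟨fun i => r (n + i), rfl, fun i => ?_, ?_⟩
    · exact hrstep (n + i)
    · rw [Filter.frequently_atTop] at hrF ⊢
      intro N
      obtain ⟨i, hi, hF⟩ := hrF (N + n)
      refine ⟨i - n, by omega, ?_⟩
      have h : n + (i - n) = i := by omega
      have h2 : n + (i - n + 1) = i + 1 := by omega
      simpa [h, h2] using hF
end

section
/- (Preservation of Communication.) Let M be a communicating finite labeled MDP with state set S, initial state s0, positive-probability transition relation step, and labeling L : S → Σ, and let Q be a finite set of automaton states with initial state q0 and complete transition function δ : Q → Σ → Set Q (δ q a is nonempty for all q, a). Form the reward-machine product on S × Q whose edges are: ((s,q),(s',q')) whenever step s s' and q' ∈ δ q (L s) (a synchronized move on the label of the current state), and ((s,q),(s,q0)) for every (s,q) (an ε-reset to the initial automaton state). Then the product is communicating on its reachable part: for all product states x and y that are reachable from (s0, q0), y is reachable from x via the product edge relation. -/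
/-- The edge relation of the product of a labeled MDP (with positive-probability
transition relation `step` and labeling `L`) with the reward machine built from an
automaton with transition function `δ`: a synchronized move on the label of the
current MDP state, or an ε-reset to the initial automaton state `q0`. -/
def prodStep {A S Q : Type*} (step : S → S → Prop) (L : S → A)
    (δ : Q → A → Set Q) (q0 : Q) : S × Q → S × Q → Prop :=
  fun x y =>
    (step x.1 y.1 ∧ y.2 ∈ δ x.2 (L x.1)) ∨ (y.1 = x.1 ∧ y.2 = q0)

theorem product_communicating
    {A S Q : Type*} [Fintype A] [Nonempty A] [Fintype S] [Fintype Q]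
    (s0 : S) (step : S → S → Prop) (L : S → A)
    (hcomm : ∀ s s' : S, Relation.ReflTransGen step s s')
    (q0 : Q) (δ : Q → A → Set Q)
    (hcomplete : ∀ (q : Q) (a : A), (δ q a).Nonempty) :
    ∀ x y : S × Q,
      Relation.ReflTransGen (prodStep step L δ q0) (s0, q0) x →
      Relation.ReflTransGen (prodStep step L δ q0) (s0, q0) y →
      Relation.ReflTransGen (prodStep step L δ q0) x y := by
  intro x y hx hy
  -- from any product state we can reach (s', q0) for any s'
  have key : ∀ s s' : S, Relation.ReflTransGen step s s' →
      ∀ q : Q, Relation.ReflTransGen (prodStep step L δ q0) (s, q) (s', q0) := by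
    intro s s' h
    induction h with
    | refl =>
      intro q
      exact Relation.ReflTransGen.single (Or.inr ⟨rfl, rfl⟩)
    | tail _ hstep ih =>
      rename_i b c _
      intro q
      refine (ih q).trans ?_
      obtain ⟨q', hq'⟩ := hcomplete q0 (L b)
      exact Relation.ReflTransGen.head (b := (c, q')) (Or.inl ⟨hstep, hq'⟩)
        (Relation.ReflTransGen.single (Or.inr ⟨rfl, rfl⟩))
  exact ((key x.1 s0 (hcomm x.1 s0) x.2).trans hy)
end

section
/- (Preservation of Communication for the Lexicographic Reward Machine.) Let M be a communicating finite labeled MDP with state set S, initial state s0, positive-probability transition relation step, and labeling L : S → Σ; let Q be a finite set of automaton states with initial state q0, complete transition function δ : Q → Σ → Set Q (δ q a nonempty for all q, a), and accepting-transition set F ⊆ Q × Σ × Q. Form the two-layer product on S × Q × Bool with edges (writing l = L s, and assuming step s s' and q' ∈ δ q l for the synchronized moves): from (s,q,false) there are edges to both (s',q',false) and (s',q',true); from (s,q,true) there is an edge to (s',q',true) when (q,l,q') ∉ F and an edge to (s',q',false) when (q,l,q') ∈ F; moreover, for q ≠ q0 there is an ε1-reset edge from (s,q,b) to (s,q0,b),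 and there is an ε2-reset edge from (s,q,true) to (s,q,false). Then the two-layer product is communicating on its reachable part: for all product states x and y reachable from (s0, q0, false), y is reachable from x via the product edge relation. -/
/-- The edge relation of the two-layer lexicographic reward-machine product on
`S × Q × Bool`.  Writing `l = L s` for the label of the current MDP state:
* from `(s, q, false)` there are synchronized edges to `(s', q', false)` and
  `(s', q', true)` whenever `step s s'` and `q' ∈ δ q l`;
* from `(s, q, true)` there is a synchronized edge to `(s', q', true)` when
  `(q, l, q') ∉ F`, and to `(s', q', false)` when `(q, l, q') ∈ F`;
* an ε₁-reset edge from `(s, q, b)` to `(s, q0, b)` whenever `q ≠ q0`;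
* an ε₂-reset edge from `(s, q, true)` to `(s, q, false)`. -/
def lexStep {A S Q : Type*} (step : S → S → Prop) (L : S → A)
    (δ : Q → A → Set Q) (q0 : Q) (F : Set (Q × A × Q)) :
    S × Q × Bool → S × Q × Bool → Prop :=
  fun x y =>
    (step x.1 y.1 ∧ y.2.1 ∈ δ x.2.1 (L x.1) ∧
      (x.2.2 = false ∨
        (x.2.2 = true ∧ y.2.2 = true ∧ (x.2.1, L x.1, y.2.1) ∉ F) ∨
        (x.2.2 = true ∧ y.2.2 = false ∧ (x.2.1, L x.1, y.2.1) ∈ F)))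
    ∨ (y.1 = x.1 ∧ y.2.1 = q0 ∧ y.2.2 = x.2.2 ∧ x.2.1 ≠ q0)
    ∨ (y.1 = x.1 ∧ y.2.1 = x.2.1 ∧ x.2.2 = true ∧ y.2.2 = false)

theorem lexicographic_product_communicating
    {A S Q : Type*} [Fintype A] [Nonempty A] [Fintype S] [Fintype Q]
    (s0 : S) (step : S → S → Prop) (L : S → A)
    (hcomm : ∀ s s' : S, Relation.ReflTransGen step s s')
    (q0 : Q) (δ : Q → A → Set Q)
    (hcomplete : ∀ (q : Q) (a : A), (δ q a).Nonempty)
    (F : Set (Q × A × Q)) :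
    ∀ x y : S × Q × Bool,
      Relation.ReflTransGen (lexStep step L δ q0 F) (s0, q0, false) x →
      Relation.ReflTransGen (lexStep step L δ q0 F) (s0, q0, false) y →
      Relation.ReflTransGen (lexStep step L δ q0 F) x y := by
  set R := lexStep step L δ q0 F with hR
  -- from any state reach (s, q0, false)
  have toBase : ∀ x : S × Q × Bool, Relation.ReflTransGen R x (x.1, q0, false) := by
    intro ⟨s, q, b⟩
    have h1 : Relation.ReflTransGen R (s, q, b) (s, q, false) := by
      cases b with
      | false => exact Relation.ReflTransGen.refl
      | true =>
        exact Relation.ReflTransGen.single (Or.inr (Or.inr ⟨rfl, rfl, rfl, rfl⟩))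
    refine h1.trans ?_
    by_cases hq : q = q0
    · subst hq; exact Relation.ReflTransGen.refl
    · exact Relation.ReflTransGen.single (Or.inr (Or.inl ⟨rfl, rfl, rfl, hq⟩))
  -- one MDP step
  have oneStep : ∀ s s' : S, step s s' →
      Relation.ReflTransGen R (s, q0, false) (s', q0, false) := by
    intro s s' hstep
    obtain ⟨q', hq'⟩ := hcomplete q0 (L s)
    have e : R (s, q0, false) (s', q', false) :=
      Or.inl ⟨hstep, hq', Or.inl rfl⟩
    exact (Relation.ReflTransGen.single e).trans (toBase (s', q', false))
  -- many MDP steps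
  have manySteps : ∀ s s' : S, Relation.ReflTransGen step s s' →
      Relation.ReflTransGen R (s, q0, false) (s', q0, false) := by
    intro s s' h
    induction h with
    | refl => exact Relation.ReflTransGen.refl
    | tail _ hstep ih => exact ih.trans (oneStep _ _ hstep)
  intro x y _ hy
  exact (toBase x).trans ((manySteps x.1 s0 (hcomm _ _)).trans hy)
end

section
/- If L is a stable specification over Σ and L is different from the set of all ω-words Σ^ω, then the complement of L (in Σ^ω) is an absolute liveness specification. -/
theorem compl_of_stable_absoluteLiveness
    {A : Type*} [Fintype A] [Nonempty A] (L : Set (ℕ → A))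
    (hst : Stable L) (hne : L ≠ Set.univ) :
    AbsoluteLiveness Lᶜ := by
  constructor
  · rcases Set.ne_univ_iff_exists_notMem L |>.mp hne with ⟨w, hw⟩
    exact ⟨w, hw⟩
  · intro u w hw hmem
    apply hw
    have := hst _ hmem u.length
    have heq : (fun i => prepend u w (u.length + i)) = w := by
      funext i
      simp [prepend, Nat.add_sub_cancel_left]
    rwa [heq] at this
end

section
/- If L is an absolute liveness specification over Σ, then the complement of L (in Σ^ω) is a stable specification different from Σ^ω. -/
theorem compl_of_absoluteLiveness_stable
    {A : Type*} [Fintype A] [Nonempty A] (L : Set (ℕ → A))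
    (hal : AbsoluteLiveness L) :
    Stable Lᶜ ∧ Lᶜ ≠ Set.univ := by
  obtain ⟨⟨w0, hw0⟩, hcl⟩ := hal
  constructor
  · intro w hw n hdrop
    apply hw
    have := hcl (List.ofFn (fun i : Fin n => w i)) _ hdrop
    convert this using 1
    funext i
    simp only [prepend, List.length_ofFn, List.get_ofFn]
    split
    · simp
    · next h => congr 1; omega
  · intro h
    have : w0 ∈ Lᶜ := h ▸ Set.mem_univ w0
    exact this hw0
end

section
/- A specification L over Σ is an absolute liveness specification if, and only if, L is nonempty and L coincides with its 'eventually' closure: for every ω-word w, if there exists n : ℕ with drop n w ∈ L, then w ∈ L. (This is the language-theoretic formulation of the LTL characterization 'φ is absolute liveness iff φ is satisfiable and φ ≡ F φ'.) -/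
lemma prepend_ofFn_drop {A : Type*} (w : ℕ → A) (n : ℕ) :
    prepend (List.ofFn fun i : Fin n => w i) (fun i => w (n + i)) = w := by
  funext i
  simp only [prepend, List.length_ofFn, List.get_ofFn]
  split_ifs with h
  · simp
  · congr 1; omega

theorem absoluteLiveness_iff_eventually_closure
    {A : Type*} [Fintype A] [Nonempty A] (L : Set (ℕ → A)) :
    AbsoluteLiveness L ↔
      (L.Nonempty ∧ ∀ w : ℕ → A, (∃ n : ℕ, (fun i => w (n + i)) ∈ L) → w ∈ L) := by
  constructor
  · rintro ⟨hne, hcl⟩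
    refine ⟨hne, fun w ⟨n, hn⟩ => ?_⟩
    have := hcl (List.ofFn fun i : Fin n => w i) _ hn
    rwa [prepend_ofFn_drop] at this
  · rintro ⟨hne, hcl⟩
    refine ⟨hne, fun u w hw => ?_⟩
    refine hcl _ ⟨u.length, ?_⟩
    have : (fun i => prepend u w (u.length + i)) = w := by
      funext i
      simp [prepend]
    rwa [this]
end
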